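/- For every i ∈ Fin 6, the minimal faces of the simplex containing consecutive midpoints intersect nontrivially: segment ℝ (e i) (e (i+1)) ∩ segment ℝ (e (i+1)) (e (i+2)) = {e (i+1)} (indices cyclic in Fin 6); in particular the minimal faces of Δ containing the counter-images of the hexagon's extreme points have non-empty pairwise intersection, disproving Conjecture 3 of Porta Mana (2011). -/

import Mathlib

noncomputable section

/-- The standard basis vectors of `ℝ^6`. -/
def e (i : Fin 6) : Fin 6 → ℝ := fun j => if j = i then 1 else 0

/-- The standard 5-simplex. -/
def Δ : Set (Fin 6 → ℝ) := convexHull ℝ {e 0, e 1, e 2, e 3, e 4, e 5}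

section SegmentInter

variable {𝕜 E : Type*} [Field 𝕜] [LinearOrder 𝕜] [IsStrictOrderedRing 𝕜]
  [AddCommGroup E] [Module 𝕜 E]

/-- `φ` is constant on `[y, z]` but injective on `[x, y]`, so the two segments meet only in `y`. -/
theorem segment_inter_segment_eq_singleton_of_linearMap (φ : E →ₗ[𝕜] 𝕜) {x y z : E}
    (hxy : φ x ≠ φ y) (hyz : φ y = φ z) :
    segment 𝕜 x y ∩ segment 𝕜 y z = {y} := by
  ext p
  simp only [Set.mem_inter_iff, Set.mem_singleton_iff]
  constructor
  · rintro ⟨⟨a, b, -, -, hab, rfl⟩, c, d, -, -, hcd, hp⟩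
    have hφ : a * φ x + b * φ y = φ y := by
      have := congrArg φ hp
      simp only [map_add, map_smul, smul_eq_mul, ← hyz] at this
      rw [← this, ← add_mul, hcd, one_mul]
    have ha : a = 0 := by
      have : a * (φ x - φ y) = 0 := by linear_combination hφ - φ y * hab
      exact (mul_eq_zero.mp this).resolve_right (sub_ne_zero.mpr hxy)
    rw [ha, zero_smul, zero_add, show b = 1 by linarith, one_smul]
  · rintro rfl
    exact ⟨right_mem_segment 𝕜 _ _, left_mem_segment 𝕜 _ _⟩

theorem segment_single_inter_segment_single {ι : Type*} [DecidableEq ι] {i j k : ι}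
    (hij : i ≠ j) (hik : i ≠ k) :
    segment 𝕜 (Pi.single i 1) (Pi.single j 1) ∩ segment 𝕜 (Pi.single j 1) (Pi.single k 1) =
      {(Pi.single j 1 : ι → 𝕜)} :=
  segment_inter_segment_eq_singleton_of_linearMap (LinearMap.proj i)
    (by simp [hij]) (by simp [hij, hik])

end SegmentInter

theorem e_eq_single (i : Fin 6) : e i = Pi.single i 1 := by
  ext j
  simp [e, Pi.single_apply]

/-- Consecutive edges of the simplex (the minimal faces containing the
counter-images of consecutive hexagon vertices) intersect exactly in the common
vertex `e (i+1)` (indices cyclic); this disproves Conjecture 3 of Porta Mana (2011). -/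
theorem consecutive_segments_inter :
    ∀ i : Fin 6,
      segment ℝ (e i) (e (i + 1)) ∩ segment ℝ (e (i + 1)) (e (i + 2)) = {e (i + 1)} := by
  intro i
  simp only [e_eq_single]
  exact segment_single_inter_segment_single (by fin_cases i <;> decide)
    (by fin_cases i <;> decide)
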